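/- Fix a > 0, β > 0, σ > 0, T > 0. For each k ≥ 1 let π_k = (0 = t₀^{(k)} < ⋯ < t_{ℓ(k)}^{(k)} = T) be a partition of [0, T] whose mesh tends to 0 as k → ∞. For each k, let (Δ_{k,j})_{0 ≤ j ≤ ℓ(k)−1} be independent random variables with Δ_{k,j} = σ |Z_{k,j}| √(W_{k,j}), where Z_{k,j} is standard normal independent of W_{k,j} ~ Gamma(a δ_{k,j}, β), δ_{k,j} = t_{j+1}^{(k)} − t_j^{(k)}. Set V_k = Σ_{j=0}^{ℓ(k)−1} Δ_{k,j}. Then Var(V_k) → σ² a T / β as k → ∞. -/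

import Mathlib

/-!
For one increment `Δ = σ |Z| √W` with `W ~ Gamma(s, β)`, `s = a δ`, independence gives
`E Δ² = σ² E Z² E W = σ² s / β`, and these second moments add up to `σ² a T / β` over the
partition; so `Var V_k` falls short of the limit exactly by `Σ_j (E Δ_{k,j})²`. Now
`E √W = Γ(s + 1/2) / (Γ(s) √β) = s Γ(s + 1/2) / (Γ(s + 1) √β)`, and `Γ(s + 1/2) / Γ(s + 1)`
is continuous, hence bounded, on `[0, a T]`; so `(E Δ_{k,j})² = O(δ_{k,j}²)` and
`Σ_j δ_{k,j}² ≤ mesh(π_k) · T → 0`.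
-/

open MeasureTheory ProbabilityTheory Real Filter Set

namespace ProbabilityTheory

lemma ae_nonneg_gammaMeasure (a r : ℝ) : ∀ᵐ x ∂gammaMeasure a r, 0 ≤ x := by
  rw [ae_iff, gammaMeasure]
  simp only [not_le]
  exact (withDensity_apply _ measurableSet_Iio).trans (lintegral_gammaPDF_of_nonpos le_rfl)

lemma integral_rpow_gammaMeasure {s r m : ℝ} (hs : 0 < s) (hr : 0 < r) (hm : -s < m) :
    ∫ x, x ^ m ∂gammaMeasure s r = Gamma (s + m) / (Gamma s * r ^ m) := by
  have hdensity : ∀ᵐ x ∂(volume : Measure ℝ), (gammaPDF s r x).toReal • x ^ m =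
      (Ioi 0).indicator (fun x => r ^ s / Gamma s * (x ^ (s + m - 1) * exp (-(r * x)))) x := by
    filter_upwards [Measure.ae_ne volume 0] with x hx
    rcases hx.lt_or_gt with hneg | hpos
    · simp [gammaPDF_of_neg hneg, hneg.not_gt]
    · rw [indicator_of_mem (mem_Ioi.mpr hpos), gammaPDF_of_nonneg hpos.le,
        ENNReal.toReal_ofReal (by positivity), smul_eq_mul,
        show s + m - 1 = (s - 1) + m by ring, rpow_add hpos]
      ring
  have hmeas : Measurable (gammaPDF s r) := (measurable_gammaPDFReal s r).ennreal_ofReal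
  rw [gammaMeasure,
    integral_withDensity_eq_integral_toReal_smul hmeas (ae_of_all _ fun _ => ENNReal.ofReal_lt_top),
    integral_congr_ae hdensity, integral_indicator measurableSet_Ioi, integral_const_mul,
    integral_rpow_mul_exp_neg_mul_Ioi (by linarith) hr, one_div, inv_rpow hr.le, rpow_add hr]
  field_simp

lemma integrable_rpow_gammaMeasure {s r m : ℝ} (hs : 0 < s) (hr : 0 < r) (hm : -s < m) :
    Integrable (fun x => x ^ m) (gammaMeasure s r) :=
  -- the Bochner integral of a non-integrable function is `0`, and this one is positive
  Integrable.of_integral_ne_zero <| by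
    rw [integral_rpow_gammaMeasure hs hr hm]
    exact (div_pos (Gamma_pos_of_pos (by linarith)) (by positivity)).ne'

lemma integral_sq_sqrt_gammaMeasure {s r : ℝ} (hs : 0 < s) (hr : 0 < r) :
    ∫ x, √x ^ 2 ∂gammaMeasure s r = s / r := by
  have h := integral_rpow_gammaMeasure hs hr (m := 1) (by linarith)
  rw [Gamma_add_one hs.ne', mul_comm (Gamma s), mul_div_mul_right _ _ (Gamma_pos_of_pos hs).ne',
    rpow_one] at h
  rw [← h]
  exact integral_congr_ae <| (ae_nonneg_gammaMeasure s r).mono fun x hx => by simp [sq_sqrt hx]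

lemma memLp_sqrt_gammaMeasure {s r : ℝ} (hs : 0 < s) (hr : 0 < r) :
    MemLp (fun x => √x) 2 (gammaMeasure s r) := by
  rw [memLp_two_iff_integrable_sq continuous_sqrt.aestronglyMeasurable]
  refine (integrable_rpow_gammaMeasure hs hr (m := 1) (by linarith)).congr ?_
  exact (ae_nonneg_gammaMeasure s r).mono fun x hx => by simp [sq_sqrt hx]

lemma integral_sqrt_gammaMeasure {s r : ℝ} (hs : 0 < s) (hr : 0 < r) :
    ∫ x, √x ∂gammaMeasure s r = Gamma (s + 1 / 2) / (Gamma s * √r) := by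
  simp_rw [sqrt_eq_rpow]
  exact integral_rpow_gammaMeasure hs hr (by linarith)

lemma integral_sq_gaussianReal (m : ℝ) (v : NNReal) :
    ∫ x, x ^ 2 ∂gaussianReal m v = v + m ^ 2 := by
  have h := variance_eq_sub (memLp_id_gaussianReal (μ := m) (v := v) 2)
  simp only [variance_id_gaussianReal, Pi.pow_apply, id_eq, integral_id_gaussianReal] at h
  linarith

variable {Ω : Type*} [MeasurableSpace Ω] {μ : Measure Ω}

lemma HasLaw.memLp_comp {𝓧 : Type*} [MeasurableSpace 𝓧] {ν : Measure 𝓧} {X : Ω → 𝓧}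
    {f : 𝓧 → ℝ} {p : ENNReal} (hX : HasLaw X ν μ) (hf : MemLp f p ν) : MemLp (f ∘ X) p μ := by
  rw [← hX.map_eq] at hf
  exact (memLp_map_measure_iff hf.aestronglyMeasurable hX.aemeasurable).mp hf

lemma IndepFun.memLp_two_mul {X Y : Ω → ℝ} (hXY : IndepFun X Y μ) (hX : MemLp X 2 μ)
    (hY : MemLp Y 2 μ) : MemLp (X * Y) 2 μ := by
  rw [memLp_two_iff_integrable_sq (hX.aestronglyMeasurable.mul hY.aestronglyMeasurable)]
  simp_rw [Pi.mul_apply, mul_pow]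
  exact (hXY.comp (measurable_id.pow_const 2) (measurable_id.pow_const 2)).integrable_mul
    hX.integrable_sq hY.integrable_sq

lemma IndepFun.variance_mul [IsProbabilityMeasure μ] {X Y : Ω → ℝ} (hXY : IndepFun X Y μ)
    (hX : MemLp X 2 μ) (hY : MemLp Y 2 μ) :
    variance (X * Y) μ = (∫ ω, X ω ^ 2 ∂μ) * (∫ ω, Y ω ^ 2 ∂μ) - (μ[X] * μ[Y]) ^ 2 := by
  have hXY2 : IndepFun (fun ω => X ω ^ 2) (fun ω => Y ω ^ 2) μ :=
    hXY.comp (measurable_id.pow_const 2) (measurable_id.pow_const 2)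
  rw [variance_eq_sub (hXY.memLp_two_mul hX hY)]
  simp only [Pi.pow_apply, Pi.mul_apply, mul_pow]
  rw [hXY2.integral_fun_mul_eq_mul_integral (hX.aestronglyMeasurable.pow 2)
      (hY.aestronglyMeasurable.pow 2),
    hXY.integral_fun_mul_eq_mul_integral hX.aestronglyMeasurable hY.aestronglyMeasurable]
  ring

lemma variance_mul_abs_mul_sqrt_of_hasLaw_gaussianReal_gammaMeasure [IsProbabilityMeasure μ]
    {Z W : Ω → ℝ} {s r : ℝ} (hs : 0 < s) (hr : 0 < r) (σ : ℝ)
    (hZ : HasLaw Z (gaussianReal 0 1) μ) (hW : HasLaw W (gammaMeasure s r) μ)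
    (hZW : IndepFun Z W μ) :
    MemLp (fun ω => σ * |Z ω| * √(W ω)) 2 μ ∧
      variance (fun ω => σ * |Z ω| * √(W ω)) μ =
        σ ^ 2 * s / r -
          (σ * ∫ x, |x| ∂gaussianReal 0 1) ^ 2 / r * (Gamma (s + 1 / 2) / Gamma s) ^ 2 := by
  set X : Ω → ℝ := fun ω => σ * |Z ω|
  set Y : Ω → ℝ := fun ω => √(W ω)
  have hXY : IndepFun X Y μ := hZW.comp (φ := fun z => σ * |z|) (by fun_prop) (by fun_prop)
  have hX : MemLp X 2 μ := hZ.memLp_comp ((memLp_id_gaussianReal 2).abs.const_mul σ)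
  have hY : MemLp Y 2 μ := hW.memLp_comp (memLp_sqrt_gammaMeasure hs hr)
  have hX2 : ∫ ω, X ω ^ 2 ∂μ = σ ^ 2 := by
    calc ∫ ω, X ω ^ 2 ∂μ = ∫ z, (σ * |z|) ^ 2 ∂gaussianReal 0 1 :=
          hZ.integral_comp (f := fun z => (σ * |z|) ^ 2) (by fun_prop)
      _ = σ ^ 2 * ∫ z, z ^ 2 ∂gaussianReal 0 1 := by
          simp_rw [mul_pow, sq_abs]
          exact integral_const_mul _ _
      _ = σ ^ 2 := by norm_num [integral_sq_gaussianReal]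
  have hX1 : μ[X] = σ * ∫ x, |x| ∂gaussianReal 0 1 :=
    (hZ.integral_comp (f := fun z => σ * |z|) (by fun_prop)).trans (integral_const_mul _ _)
  have hY2 : ∫ ω, Y ω ^ 2 ∂μ = s / r :=
    (hW.integral_comp (f := fun x => √x ^ 2) (by fun_prop)).trans
      (integral_sq_sqrt_gammaMeasure hs hr)
  have hY1 : μ[Y] = Gamma (s + 1 / 2) / (Gamma s * √r) :=
    (hW.integral_comp (f := fun x => √x) (by fun_prop)).trans (integral_sqrt_gammaMeasure hs hr)
  refine ⟨hXY.memLp_two_mul hX hY, ?_⟩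
  rw [show (fun ω => σ * |Z ω| * √(W ω)) = X * Y from rfl, hXY.variance_mul hX hY, hX2, hY2, hX1,
    hY1]
  field_simp
  rw [sq_sqrt hr.le]
  ring

lemma variance_sum_range_of_iIndepFun {X : ℕ → Ω → ℝ} {n : ℕ} (hX : ∀ j < n, MemLp (X j) 2 μ)
    (hind : iIndepFun (fun j : Fin n => X j) μ) :
    variance (∑ j ∈ Finset.range n, X j) μ = ∑ j ∈ Finset.range n, variance (X j) μ := by
  rw [← Fin.sum_univ_eq_sum_range, ← Fin.sum_univ_eq_sum_range (fun j => variance (X j) μ)]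
  exact IndepFun.variance_sum (fun i _ => hX i i.isLt) (fun i _ j _ hij => hind.indepFun hij)

end ProbabilityTheory

lemma Real.continuousAt_Gamma_of_pos {x : ℝ} (hx : 0 < x) : ContinuousAt Gamma x :=
  (differentiableAt_Gamma fun m => by linarith [(Nat.cast_nonneg m : (0 : ℝ) ≤ m)]).continuousAt

lemma Real.exists_Gamma_add_half_div_Gamma_le (L : ℝ) :
    ∃ K, ∀ s ∈ Ioc 0 L, Gamma (s + 1 / 2) / Gamma s ≤ K * s := by
  have hcont : ContinuousOn (fun s => Gamma (s + 1 / 2) / Gamma (s + 1)) (Icc 0 L) := by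
    intro s hs
    have hshift : ∀ c > 0, ContinuousAt (fun x => Gamma (x + c)) s := fun c hc =>
      ContinuousAt.comp (f := fun x => x + c)
        (continuousAt_Gamma_of_pos (by linarith [hs.1] : 0 < s + c)) (by fun_prop)
    exact ((hshift _ one_half_pos).div (hshift 1 one_pos)
      (Gamma_pos_of_pos (by linarith [hs.1])).ne').continuousWithinAt
  obtain ⟨K, hK⟩ := isCompact_Icc.exists_bound_of_continuousOn hcont
  refine ⟨K, fun s hs => ?_⟩
  have hbound := (le_abs_self _).trans (hK s (Ioc_subset_Icc_self hs))
  rw [Gamma_add_one hs.1.ne', div_mul_eq_div_div_swap, div_le_iff₀ hs.1] at hbound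
  linarith

section Partition

open Finset

lemma tendsto_sum_sq_of_tendsto_mesh {ℓ : ℕ → ℕ} {δ : ℕ → ℕ → ℝ} {m : ℕ → ℝ} {T : ℝ}
    (hδ : ∀ k, ∀ j < ℓ k, 0 ≤ δ k j) (hsum : ∀ k, ∑ j ∈ range (ℓ k), δ k j ≤ T)
    (hm : ∀ k, ∀ j < ℓ k, δ k j ≤ m k) (hmesh : Tendsto m atTop (nhds 0)) :
    Tendsto (fun k => ∑ j ∈ range (ℓ k), δ k j ^ 2) atTop (nhds 0) := by
  refine squeeze_zero (fun k => sum_nonneg fun j _ => sq_nonneg _) (fun k => ?_)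
    (by simpa using hmesh.abs.mul_const T)
  calc ∑ j ∈ range (ℓ k), δ k j ^ 2 ≤ ∑ j ∈ range (ℓ k), |m k| * δ k j :=
        sum_le_sum fun j hj => by
          rw [sq]
          exact mul_le_mul_of_nonneg_right ((hm k j (mem_range.mp hj)).trans (le_abs_self _))
            (hδ k j (mem_range.mp hj))
    _ = |m k| * ∑ j ∈ range (ℓ k), δ k j := (mul_sum ..).symm
    _ ≤ |m k| * T := mul_le_mul_of_nonneg_left (hsum k) (abs_nonneg _)

lemma tendsto_sum_sq_Gamma_add_half_div_Gamma {ℓ : ℕ → ℕ} {s : ℕ → ℕ → ℝ} {m : ℕ → ℝ} {L : ℝ}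
    (hs : ∀ k, ∀ j < ℓ k, 0 < s k j) (hsum : ∀ k, ∑ j ∈ range (ℓ k), s k j ≤ L)
    (hm : ∀ k, ∀ j < ℓ k, s k j ≤ m k) (hmesh : Tendsto m atTop (nhds 0)) :
    Tendsto (fun k => ∑ j ∈ range (ℓ k), (Gamma (s k j + 1 / 2) / Gamma (s k j)) ^ 2)
      atTop (nhds 0) := by
  obtain ⟨K, hK⟩ := exists_Gamma_add_half_div_Gamma_le L
  have hsq := tendsto_sum_sq_of_tendsto_mesh (fun k j hj => (hs k j hj).le) hsum hm hmesh
  refine squeeze_zero (fun k => sum_nonneg fun j _ => sq_nonneg _) (fun k => ?_)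
    (by simpa using hsq.const_mul (K ^ 2))
  refine (sum_le_sum fun j hj => ?_).trans_eq (mul_sum ..).symm
  have hj := mem_range.mp hj
  have hsL : s k j ≤ L := (single_le_sum (fun i hi => (hs k i (mem_range.mp hi)).le)
    (mem_range.mpr hj)).trans (hsum k)
  calc (Gamma (s k j + 1 / 2) / Gamma (s k j)) ^ 2 ≤ (K * s k j) ^ 2 :=
        pow_le_pow_left₀ (div_pos (Gamma_pos_of_pos (by linarith [hs k j hj]))
          (Gamma_pos_of_pos (hs k j hj))).le (hK _ ⟨hs k j hj, hsL⟩) 2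
    _ = K ^ 2 * s k j ^ 2 := mul_pow _ _ _

end Partition

theorem variance_variation_tendsto_gamma_gh_general
    {Ω : Type*} [MeasurableSpace Ω] (P : Measure Ω) [IsProbabilityMeasure P]
    (a β σ T : ℝ) (ha : 0 < a) (hβ : 0 < β)
    -- the partitions `π_k = (0 = t k 0 < t k 1 < ⋯ < t k (ℓ k) = T)`
    (ℓ : ℕ → ℕ) (hℓ : ∀ k, 0 < ℓ k) (t : ℕ → ℕ → ℝ)
    (ht0 : ∀ k, t k 0 = 0) (htT : ∀ k, t k (ℓ k) = T)
    (hmono : ∀ k, ∀ j < ℓ k, t k j < t k (j + 1))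
    -- the mesh `m(π_k)` tends to `0`
    (hmesh : Tendsto
      (fun k => (Finset.range (ℓ k)).sup'
        (Finset.nonempty_range_iff.mpr (hℓ k).ne') (fun j => t k (j + 1) - t k j))
      atTop (nhds 0))
    -- the random variables
    (Z W : ℕ → ℕ → Ω → ℝ)
    (hZmeas : ∀ k j, Measurable (Z k j)) (hWmeas : ∀ k j, Measurable (W k j))
    (hZlaw : ∀ k, ∀ j < ℓ k, Measure.map (Z k j) P = gaussianReal 0 1)
    (hWlaw : ∀ k, ∀ j < ℓ k,
      Measure.map (W k j) P = gammaMeasure (a * (t k (j + 1) - t k j)) β)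
    (hindep : ∀ k j, IndepFun (Z k j) (W k j) P)
    (Δ : ℕ → ℕ → Ω → ℝ)
    (hΔ : ∀ k j ω, Δ k j ω = σ * |Z k j ω| * Real.sqrt (W k j ω))
    -- for each `k`, the family `(Δ_{k,j})_{0 ≤ j ≤ ℓ(k) − 1}` is independent
    (hΔindep : ∀ k, iIndepFun
      (fun j : Fin (ℓ k) => Δ k (j : ℕ)) P)
    (V : ℕ → Ω → ℝ) (hV : ∀ k ω, V k ω = ∑ j ∈ Finset.range (ℓ k), Δ k j ω) :
    Tendsto (fun k => variance (V k) P) atTop (nhds (σ ^ 2 * a * T / β)) := by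
  set δ : ℕ → ℕ → ℝ := fun k j => t k (j + 1) - t k j
  set c := ∫ x, |x| ∂gaussianReal 0 1
  have hδpos : ∀ k, ∀ j < ℓ k, 0 < δ k j := fun k j hj => sub_pos.mpr (hmono k j hj)
  have hδsum : ∀ k, ∑ j ∈ Finset.range (ℓ k), δ k j = T := fun k => by
    rw [Finset.sum_range_sub (t k), htT, ht0, sub_zero]
  have hΔvar : ∀ k, ∀ j < ℓ k, MemLp (Δ k j) 2 P ∧ variance (Δ k j) P =
      σ ^ 2 * (a * δ k j) / β -
        (σ * c) ^ 2 / β * (Gamma (a * δ k j + 1 / 2) / Gamma (a * δ k j)) ^ 2 :=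
    fun k j hj => funext (hΔ k j) ▸
      variance_mul_abs_mul_sqrt_of_hasLaw_gaussianReal_gammaMeasure (mul_pos ha (hδpos k j hj))
        hβ σ ⟨(hZmeas k j).aemeasurable, hZlaw k j hj⟩ ⟨(hWmeas k j).aemeasurable, hWlaw k j hj⟩
        (hindep k j)
  have hVvar : ∀ k, variance (V k) P = σ ^ 2 * a * T / β - (σ * c) ^ 2 / β *
      ∑ j ∈ Finset.range (ℓ k), (Gamma (a * δ k j + 1 / 2) / Gamma (a * δ k j)) ^ 2 := fun k => by
    rw [show V k = ∑ j ∈ Finset.range (ℓ k), Δ k j from funext fun ω => by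
        rw [hV, Finset.sum_apply],
      variance_sum_range_of_iIndepFun (fun j hj => (hΔvar k j hj).1) (hΔindep k),
      Finset.sum_congr rfl fun j hj => (hΔvar k j (Finset.mem_range.mp hj)).2,
      Finset.sum_sub_distrib, ← Finset.mul_sum, ← hδsum k]
    congr 1
    rw [Finset.mul_sum, Finset.sum_div]
    exact Finset.sum_congr rfl fun j _ => by ring
  have hR := tendsto_sum_sq_Gamma_add_half_div_Gamma (s := fun k j => a * δ k j)
    (fun k j hj => mul_pos ha (hδpos k j hj)) (fun k => by rw [← Finset.mul_sum, hδsum])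
    (fun k j hj => mul_le_mul_of_nonneg_left (Finset.le_sup' _ (Finset.mem_range.mpr hj)) ha.le)
    (by simpa using hmesh.const_mul a)
  rw [show (fun k => variance (V k) P) = _ from funext hVvar]
  simpa using (hR.const_mul ((σ * c) ^ 2 / β)).const_sub (σ ^ 2 * a * T / β)

/-- **Limit of the variance of the variation of centered gamma-gh Lévy increments.**
Along partitions `π_k` of `[0, T]` with mesh tending to `0`, if for each `k` the
`Δ_{k,j} = σ |Z_{k,j}| √(W_{k,j})`, `0 ≤ j ≤ ℓ(k) − 1`, are independent, with `Z_{k,j}`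
standard normal independent of `W_{k,j} ~ Gamma(a δ_{k,j}, β)`, and `V_k = Σ_j Δ_{k,j}`,
then `Var(V_k) → σ² a T / β` as `k → ∞`. -/
theorem variance_variation_tendsto_gamma_gh
    {Ω : Type*} [MeasurableSpace Ω] (P : Measure Ω) [IsProbabilityMeasure P]
    (a β σ T : ℝ) (ha : 0 < a) (hβ : 0 < β) (hσ : 0 < σ) (hT : 0 < T)
    -- the partitions `π_k = (0 = t k 0 < t k 1 < ⋯ < t k (ℓ k) = T)`
    (ℓ : ℕ → ℕ) (hℓ : ∀ k, 0 < ℓ k) (t : ℕ → ℕ → ℝ)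
    (ht0 : ∀ k, t k 0 = 0) (htT : ∀ k, t k (ℓ k) = T)
    (hmono : ∀ k, ∀ j < ℓ k, t k j < t k (j + 1))
    -- the mesh `m(π_k)` tends to `0`
    (hmesh : Tendsto
      (fun k => (Finset.range (ℓ k)).sup'
        (Finset.nonempty_range_iff.mpr (hℓ k).ne') (fun j => t k (j + 1) - t k j))
      atTop (nhds 0))
    -- the random variables
    (Z W : ℕ → ℕ → Ω → ℝ)
    (hZmeas : ∀ k j, Measurable (Z k j)) (hWmeas : ∀ k j, Measurable (W k j))
    (hZlaw : ∀ k, ∀ j < ℓ k, Measure.map (Z k j) P = gaussianReal 0 1)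
    (hWlaw : ∀ k, ∀ j < ℓ k,
      Measure.map (W k j) P = gammaMeasure (a * (t k (j + 1) - t k j)) β)
    (hindep : ∀ k j, IndepFun (Z k j) (W k j) P)
    (Δ : ℕ → ℕ → Ω → ℝ)
    (hΔ : ∀ k j ω, Δ k j ω = σ * |Z k j ω| * Real.sqrt (W k j ω))
    -- for each `k`, the family `(Δ_{k,j})_{0 ≤ j ≤ ℓ(k) − 1}` is independent
    (hΔindep : ∀ k, iIndepFun
      (fun j : Fin (ℓ k) => Δ k (j : ℕ)) P)
    (V : ℕ → Ω → ℝ) (hV : ∀ k ω, V k ω = ∑ j ∈ Finset.range (ℓ k), Δ k j ω) :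
    Tendsto (fun k => variance (V k) P) atTop (nhds (σ ^ 2 * a * T / β)) :=
  variance_variation_tendsto_gamma_gh_general P a β σ T ha hβ ℓ hℓ t ht0 htT hmono hmesh Z W hZmeas
    hWmeas hZlaw hWlaw hindep Δ hΔ hΔindep V hV
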